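/- arXiv:1602.06560 — 2 statements merged into one kernel-verified Lean document; each statement's English description precedes it below -/
import Mathlib

section
/- Let K be a convex body in ℝ^n and x ∈ F_n(K), i.e., gx = x for every invertible affine map g with gK = K. Then the map f : Aff(n)·K → ℝ^n defined on the orbit of K by f(gK) = gx is well-defined, continuous, and Aff(n)-equivariant. -/
open Metric Set Pointwise

noncomputable section

abbrev En (n : ℕ) : Type := EuclideanSpace ℝ (Fin n)

abbrev AffG (n : ℕ) : Type := En n ≃ᵃ[ℝ] En n

abbrev KBody (n : ℕ) : Type :=
  {K : ConvexBody (En n) // (interior (K : Set (En n))).Nonempty}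

instance (n : ℕ) : SMul (AffG n) (KBody n) where
  smul g K :=
    ⟨⟨g '' (K.1 : Set (En n)),
      K.1.convex.affine_image g.toAffineMap,
      K.1.isCompact.image g.continuous_of_finiteDimensional,
      K.1.nonempty.image g⟩,
      by
        obtain ⟨x, hx⟩ := K.2
        refine ⟨g x, ?_⟩
        show g x ∈ interior (⇑g '' (K.1 : Set (En n)))
        rw [← g.coe_toHomeomorphOfFiniteDimensional,
          ← Homeomorph.image_interior]
        exact ⟨x, hx, rfl⟩⟩

theorem smul_body_coe {n : ℕ} (g : AffG n) (K : KBody n) :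
    ((g • K : KBody n).1 : Set (En n)) = g '' (K.1 : Set (En n)) := rfl

instance (n : ℕ) : MulAction (AffG n) (KBody n) where
  one_smul K := by
    apply Subtype.ext; apply ConvexBody.ext
    rw [smul_body_coe]; simp
  mul_smul g h K := by
    apply Subtype.ext; apply ConvexBody.ext
    rw [smul_body_coe, smul_body_coe, smul_body_coe, Set.image_image]
    simp [AffineEquiv.mul_def]

/-- An affine invariant point. -/
def IsAffineInvariantPoint {n : ℕ} (p : KBody n → En n) : Prop :=
  Continuous p ∧ ∀ (g : AffG n) (K : KBody n), p (g • K) = g (p K)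

/-- The set `F_n(K)` of points fixed by every affine symmetry of `K`. -/
def Fn {n : ℕ} (K : KBody n) : Set (En n) :=
  {x | ∀ g : AffG n, g • K = K → g x = x}

/-- The set `P_n(K)` of values of affine invariant points at `K`. -/
def Pn {n : ℕ} (K : KBody n) : Set (En n) :=
  {x | ∃ p : KBody n → En n, IsAffineInvariantPoint p ∧ p K = x}

/-!
Well-definedness and equivariance only use that the stabilizer of `K` fixes `x`. Continuity is a
properness argument. If `vᵢ • K → g • K`, then eventually every `vᵢ` maps `K`, which contains a
ball, into a fixed bounded set, so the `vᵢ` are bounded as affine maps and a subsequence converges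
to an affine map `h` with `h '' K = g '' K`. As `g '' K` has interior, `h` is invertible, so
`g⁻¹ * h` stabilizes `K`, and `vᵢ x → h x = g x` along the subsequence.
-/

open Filter Topology Metric Set MulAction Function

namespace ContinuousAffineMap

variable {V W : Type*} [NormedAddCommGroup V] [NormedSpace ℝ V]
  [NormedAddCommGroup W] [NormedSpace ℝ W]

lemma norm_apply_le (f : V →ᴬ[ℝ] W) (y : V) : ‖f y‖ ≤ ‖f‖ * (‖y‖ + 1) := by
  rw [f.decomp]
  calc ‖f.contLinear y + f 0‖ ≤ ‖f.contLinear‖ * ‖y‖ + ‖f 0‖ :=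
        (norm_add_le _ _).trans (add_le_add_left (f.contLinear.le_opNorm y) _)
    _ ≤ ‖f‖ * ‖y‖ + ‖f‖ := by gcongr; exacts [f.norm_contLinear_le, f.norm_image_zero_le]
    _ = ‖f‖ * (‖y‖ + 1) := by ring

lemma dist_apply_le (f g : V →ᴬ[ℝ] W) (y : V) : dist (f y) (g y) ≤ dist f g * (‖y‖ + 1) := by
  simpa [dist_eq_norm] using (f - g).norm_apply_le y

lemma continuous_apply (y : V) : Continuous fun f : V →ᴬ[ℝ] W => f y :=
  (LipschitzWith.of_dist_le' fun f g => (dist_apply_le f g y).trans_eq (mul_comm _ _)).continuous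

instance [FiniteDimensional ℝ V] [FiniteDimensional ℝ W] : FiniteDimensional ℝ (V →ᴬ[ℝ] W) :=
  (decompLinearIsometryEquiv ℝ ℝ V W).symm.toLinearEquiv.finiteDimensional

lemma norm_contLinear_le_of_mapsTo_ball {f : V →ᴬ[ℝ] W} {q : V} {s R : ℝ} (hs : 0 < s)
    (hf : MapsTo f (ball q s) (closedBall 0 R)) : ‖f.contLinear‖ ≤ 4 * R / s := by
  have hR : 0 ≤ R := (norm_nonneg _).trans (mem_closedBall_zero_iff.1 (hf (mem_ball_self hs)))
  refine f.contLinear.opNorm_le_of_shell hs (by positivity) (c := (2 : ℝ)) (by norm_num)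
    fun z hz₁ hz₂ => ?_
  have hzq : z + q ∈ ball q s := by rwa [mem_ball, dist_eq_norm, add_sub_cancel_right]
  have hLz : f.contLinear z = f (z + q) - f q := by
    simpa using f.contLinear_map_vsub (z + q) q
  calc ‖f.contLinear z‖ ≤ ‖f (z + q)‖ + ‖f q‖ := hLz ▸ norm_sub_le _ _
    _ ≤ R + R := add_le_add (mem_closedBall_zero_iff.1 (hf hzq))
        (mem_closedBall_zero_iff.1 (hf (mem_ball_self hs)))
    _ = 4 * R / s * (s / 2) := by field_simp; ring
    _ ≤ 4 * R / s * ‖z‖ := by gcongr; simpa using hz₁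

lemma isBounded_setOf_mapsTo {A : Set V} {B : Set W} (hA : (interior A).Nonempty)
    (hB : Bornology.IsBounded B) :
    Bornology.IsBounded {f : V →ᴬ[ℝ] W | MapsTo f A B} := by
  obtain ⟨q, hq⟩ := hA
  obtain ⟨s, hs, hqs⟩ := Metric.isOpen_iff.1 isOpen_interior q hq
  obtain ⟨R, -, hR⟩ := hB.exists_pos_norm_le
  refine isBounded_iff_forall_norm_le.2 ⟨max (R + 4 * R / s * ‖q‖) (4 * R / s), fun f hf => ?_⟩
  have hball : MapsTo f (ball q s) (closedBall 0 R) := fun y hy =>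
    mem_closedBall_zero_iff.2 (hR _ (hf (interior_subset (hqs hy))))
  have hL := norm_contLinear_le_of_mapsTo_ball hs hball
  have h0 : f 0 = f q + f.contLinear (-q) :=
    eq_add_of_sub_eq' (by simpa using (f.contLinear_map_vsub 0 q).symm)
  rw [norm_def]
  refine max_le_max ?_ hL
  calc ‖f 0‖ ≤ ‖f q‖ + ‖f.contLinear (-q)‖ := h0 ▸ norm_add_le _ _
    _ ≤ R + 4 * R / s * ‖q‖ := by
      gcongr
      · exact mem_closedBall_zero_iff.1 (hball (mem_ball_self hs))
      · exact (f.contLinear.le_opNorm _).trans (by rw [norm_neg]; gcongr)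

end ContinuousAffineMap

lemma AffineMap.surjective_of_nonempty_interior_range {V W : Type*} [NormedAddCommGroup V]
    [NormedSpace ℝ V] [NormedAddCommGroup W] [NormedSpace ℝ W] (f : V →ᵃ[ℝ] W)
    (h : (interior (range f)).Nonempty) : Surjective f := by
  have hspan : affineSpan ℝ (range f) = ⊤ :=
    top_unique (isOpen_interior.affineSpan_eq_top h ▸ affineSpan_mono ℝ interior_subset)
  have hmap : ((⊤ : AffineSubspace ℝ V).map f : Set W) = range f := by simp
  rw [← hmap, AffineSubspace.affineSpan_coe] at hspan
  rw [← range_eq_univ, ← hmap, hspan, AffineSubspace.top_coe]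

def AffineEquiv.toContinuousAffineMap {V W : Type*} [NormedAddCommGroup V] [NormedSpace ℝ V]
    [FiniteDimensional ℝ V] [NormedAddCommGroup W] [NormedSpace ℝ W] (g : V ≃ᵃ[ℝ] W) :
    V →ᴬ[ℝ] W :=
  g.toContinuousAffineEquiv.toContinuousAffineMap

namespace ConvexBody

variable {V W : Type*} [NormedAddCommGroup V] [NormedSpace ℝ V]
  [NormedAddCommGroup W] [NormedSpace ℝ W]

def map (f : V →ᴬ[ℝ] W) (K : ConvexBody V) : ConvexBody W where
  carrier := f '' K
  convex' := K.convex.affine_image f.toAffineMap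
  isCompact' := K.isCompact.image f.continuous
  nonempty' := K.nonempty.image f

@[simp]
lemma coe_map (f : V →ᴬ[ℝ] W) (K : ConvexBody V) : (K.map f : Set W) = f '' K := rfl

lemma dist_map_le {f g : V →ᴬ[ℝ] W} {K : ConvexBody V} {c : ℝ} (hc : 0 ≤ c)
    (h : ∀ y ∈ K, dist (f y) (g y) ≤ c) : dist (K.map f) (K.map g) ≤ c := by
  rw [← hausdorffDist_coe]
  refine hausdorffDist_le_of_mem_dist hc ?_ ?_ <;> rintro _ ⟨y, hy, rfl⟩
  · exact ⟨g y, mem_image_of_mem g hy, h y hy⟩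
  · exact ⟨f y, mem_image_of_mem f hy, dist_comm (g y) (f y) ▸ h y hy⟩

lemma continuous_map (K : ConvexBody V) : Continuous fun f : V →ᴬ[ℝ] W => K.map f := by
  obtain ⟨R, hR, hKR⟩ := K.isBounded.exists_pos_norm_le
  refine (LipschitzWith.of_dist_le' (K := R + 1) fun f g => dist_map_le (by positivity)
    fun y hy => ?_).continuous
  calc dist (f y) (g y) ≤ dist f g * (‖y‖ + 1) := f.dist_apply_le g y
    _ ≤ (R + 1) * dist f g := by rw [mul_comm]; gcongr; exact hKR y hy

end ConvexBody

section AffineOrbit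

variable {n : ℕ}

lemma exists_subseq_tendsto_of_tendsto_smul (K : KBody n) {A : KBody n} {v : ℕ → AffG n}
    (hv : Tendsto (fun i => v i • K) atTop (𝓝 A)) :
    ∃ h : AffG n, h • K = A ∧ ∃ φ : ℕ → ℕ, StrictMono φ ∧
      Tendsto (fun j => (v (φ j)).toContinuousAffineMap) atTop (𝓝 h.toContinuousAffineMap) := by
  have hmaps : ∀ᶠ i in atTop,
      (v i).toContinuousAffineMap ∈
        {f : En n →ᴬ[ℝ] En n | MapsTo f (K.1 : Set (En n)) (thickening 1 (A.1 : Set (En n)))} := by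
    filter_upwards [hv (ball_mem_nhds A one_pos)] with i hi y hy
    rw [mem_preimage, mem_ball, Subtype.dist_eq, ← ConvexBody.hausdorffDist_coe] at hi
    obtain ⟨z, hz, hyz⟩ := exists_dist_lt_of_hausdorffDist_lt
      (show v i y ∈ ((v i • K).1 : Set (En n)) from mem_image_of_mem _ hy) hi
      ConvexBody.hausdorffEDist_ne_top
    exact mem_thickening_iff.2 ⟨z, hz, hyz⟩
  obtain ⟨f, -, φ, hφ, hf⟩ := tendsto_subseq_of_frequently_bounded
    (ContinuousAffineMap.isBounded_setOf_mapsTo K.2 A.1.isBounded.thickening) hmaps.frequently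
  have hAf : A.1 = K.1.map f := tendsto_nhds_unique
    ((continuous_subtype_val.tendsto A).comp (hv.comp hφ.tendsto_atTop))
    ((K.1.continuous_map.tendsto f).comp hf)
  have hsurj : Surjective f := f.toAffineMap.surjective_of_nonempty_interior_range
    (A.2.mono (interior_mono (by rw [hAf, ConvexBody.coe_map]; exact image_subset_range _ _)))
  have hbij : Bijective f.toAffineMap :=
    ⟨(AffineMap.linear_injective_iff _).1 (LinearMap.injective_iff_surjective.2
      ((AffineMap.linear_surjective_iff _).2 hsurj)), hsurj⟩
  refine ⟨AffineEquiv.ofBijective hbij, Subtype.ext (hAf ▸ rfl), φ, hφ, ?_⟩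
  have hh : (AffineEquiv.ofBijective hbij).toContinuousAffineMap = f :=
    ContinuousAffineMap.ext fun _ => rfl
  rwa [hh]

lemma apply_eq_of_smul_eq {K : KBody n} {x : En n} (hx : x ∈ Fn K) {g g' : AffG n}
    (h : g • K = g' • K) : g x = g' x := by
  have := hx (g'⁻¹ * g) (by rw [mul_smul, h, inv_smul_smul])
  rwa [AffineEquiv.coe_mul, comp_apply, AffineEquiv.inv_def, AffineEquiv.symm_apply_eq] at this

def orbitMap (K : KBody n) (x : En n) (A : KBody n) : En n :=
  (Classical.epsilon fun g : AffG n => g • K = A) x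

variable {K : KBody n} {x : En n}

lemma orbitMap_smul (hx : x ∈ Fn K) (g : AffG n) : orbitMap K x (g • K) = g x :=
  apply_eq_of_smul_eq hx (Classical.epsilon_spec (p := fun g' => g' • K = g • K) ⟨g, rfl⟩)

lemma orbitMap_smul_of_mem_orbit (hx : x ∈ Fn K) (g : AffG n) {A : KBody n}
    (hA : A ∈ orbit (AffG n) K) : orbitMap K x (g • A) = g (orbitMap K x A) := by
  obtain ⟨a, rfl⟩ := hA
  rw [← mul_smul, orbitMap_smul hx, orbitMap_smul hx, AffineEquiv.coe_mul, comp_apply]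

lemma tendsto_apply_of_tendsto_smul (hx : x ∈ Fn K) {v : ℕ → AffG n} {g : AffG n}
    (hv : Tendsto (fun i => v i • K) atTop (𝓝 (g • K))) :
    Tendsto (fun i => v i x) atTop (𝓝 (g x)) := by
  refine tendsto_of_subseq_tendsto fun ns hns => ?_
  obtain ⟨h, hhK, φ, -, hφ⟩ := exists_subseq_tendsto_of_tendsto_smul K (v := v ∘ ns) (hv.comp hns)
  refine ⟨φ, ?_⟩
  rw [← apply_eq_of_smul_eq hx hhK]
  exact ((ContinuousAffineMap.continuous_apply x).tendsto _).comp hφ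

lemma continuousOn_orbitMap (hx : x ∈ Fn K) : ContinuousOn (orbitMap K x) (orbit (AffG n) K) := by
  rw [continuousOn_iff_continuous_domRestrict, continuous_iff_seqContinuous]
  intro u A hu
  choose v hv using fun i => (u i).2
  obtain ⟨g, hg⟩ := A.2
  have hvK : Tendsto (fun i => v i • K) atTop (𝓝 (g • K)) := by
    simpa only [comp_def, hv, hg] using (continuous_subtype_val.tendsto A).comp hu
  simpa only [comp_def, domRestrict_apply, ← hv, ← hg, orbitMap_smul hx]
    using tendsto_apply_of_tendsto_smul hx hvK

end AffineOrbit

/-- For `x ∈ F_n(K)`, the assignment `gK ↦ gx` gives a well-defined, continuous,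
equivariant map on the orbit of `K`. -/
theorem orbit_map_exists {n : ℕ} (K : KBody n) (x : En n)
    (hx : ∀ g : AffG n, g • K = K → g x = x) :
    ∃ f : KBody n → En n,
      ContinuousOn f (MulAction.orbit (AffG n) K) ∧
      (∀ g : AffG n, f (g • K) = g x) ∧
      (∀ (g : AffG n), ∀ A ∈ MulAction.orbit (AffG n) K, f (g • A) = g (f A)) :=
  ⟨orbitMap K x, continuousOn_orbitMap hx, orbitMap_smul hx,
    fun g _ hA => orbitMap_smul_of_mem_orbit hx g hA⟩

end
end

section
/- If a locally compact group G acts properly (in the sense of Palais) on a Tychonoff space X, then the orbit space X/G is Tychonoff (completely regular Hausdorff). -/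
open Set Pointwise

open Pointwise in
/-- A subset `S` of a `G`-space is small (Palais) if every point has a neighborhood `V`
such that `{g | gS ∩ V ≠ ∅}` has compact closure in `G`. -/
def SmallSet (G : Type*) {X : Type*} [Group G] [MulAction G X]
    [TopologicalSpace G] [TopologicalSpace X] (S : Set X) : Prop :=
  ∀ x : X, ∃ V ∈ nhds x, IsCompact (closure {g : G | ((g • S) ∩ V).Nonempty})

/-- A `G`-space is proper in the sense of Palais if it has an open cover by small sets. -/
def PalaisProper (G X : Type*) [Group G] [MulAction G X]
    [TopologicalSpace G] [TopologicalSpace X] : Prop :=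
  ∀ x : X, ∃ S : Set X, IsOpen S ∧ x ∈ S ∧ SmallSet G S

/-!
If `S` is small and `V` is the neighbourhood of `y` it provides, then `g • z ∈ S` with `z ∈ V`
forces `g` into a fixed compact set. Hence an orbit meets the open set `S` in a compact set, so
orbits are closed and the orbit space is T1. Given `x₀` outside a closed invariant set `A`, pick
`u : X → [0, 1]` with `u x₀ = 1` and `u = 0` on `A ∪ Sᶜ`, `S` a small open neighbourhood of `x₀`.
Then `F z = ⨆ g, u (g • z)` is invariant, separates `x₀` from `A`, and near every point is a
supremum over a compact subset of `G`, hence continuous; it descends to the orbit space.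
-/

section

open Filter Topology MulAction

variable {G X : Type*} [Group G] [MulAction G X]

lemma inv_mem_setOf_smul_inter_nonempty {S V : Set X} {z : X} (hz : z ∈ V) {g : G}
    (hg : g • z ∈ S) : g⁻¹ ∈ {h : G | (h • S ∩ V).Nonempty} :=
  ⟨z, ⟨g • z, hg, inv_smul_smul g z⟩, hz⟩

variable (G) in
/-- Junk value `0` unless `u` is bounded above on the orbit of `x`. -/
noncomputable def orbitSup (u : X → ℝ) (x : X) : ℝ :=
  ⨆ g : G, u (g • x)

lemma orbitSup_smul (u : X → ℝ) (g : G) (x : X) : orbitSup G u (g • x) = orbitSup G u x := by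
  simp only [orbitSup, ← mul_smul]
  exact (Equiv.mulRight g).iSup_comp (g := fun h => u (h • x))

lemma orbitSup_eq_one {u : X → ℝ} (hu : ∀ z, u z ≤ 1) {x : X} (hx : u x = 1) :
    orbitSup G u x = 1 :=
  le_antisymm (ciSup_le fun g => hu _)
    (le_ciSup_of_le ⟨1, by rintro _ ⟨g, rfl⟩; exact hu _⟩ 1 (by rw [one_smul, hx]))

lemma orbitSup_eq_zero {u : X → ℝ} {A : Set X} (hA : ∀ g : G, ∀ y ∈ A, g • y ∈ A)
    (hu : EqOn u 0 A) {y : X} (hy : y ∈ A) : orbitSup G u y = 0 := by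
  simp only [orbitSup, hu (hA _ y hy), Pi.zero_apply, ciSup_const]

variable [TopologicalSpace G] [TopologicalSpace X]

theorem SmallSet.exists_isCompact_smul_mem [ContinuousInv G] {S : Set X} (hS : SmallSet G S)
    (y : X) : ∃ V ∈ 𝓝 y, ∃ K : Set G, IsCompact K ∧ ∀ z ∈ V, ∀ g : G, g • z ∈ S → g ∈ K := by
  obtain ⟨V, hV, hK⟩ := hS y
  exact ⟨V, hV, _, hK.inv, fun z hz g hg =>
    subset_closure (inv_mem_setOf_smul_inter_nonempty hz hg)⟩

theorem PalaisProper.isClosed_orbit [ContinuousInv G] [ContinuousSMul G X] [T2Space X]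
    (h : PalaisProper G X) (x : X) : IsClosed (orbit G x) := by
  refine closure_subset_iff_isClosed.mp fun y hy => ?_
  obtain ⟨S, hSo, hyS, hS⟩ := h y
  obtain ⟨V, hV, K, hK, hKS⟩ := hS.exists_isCompact_smul_mem x
  have hsub : orbit G x ∩ S ⊆ (· • x) '' K := by
    rintro _ ⟨⟨g, rfl⟩, hgS⟩
    exact ⟨g, hKS x (mem_of_mem_nhds hV) g hgS, rfl⟩
  have hy' : y ∈ closure (orbit G x ∩ S) := by
    simpa only [inter_comm] using hSo.inter_closure ⟨hyS, hy⟩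
  obtain ⟨g, -, rfl⟩ := (hK.image (continuous_id.smul continuous_const)).isClosed.closure_subset
    (closure_mono hsub hy')
  exact mem_orbit x g

theorem PalaisProper.t1Space_quotient [ContinuousInv G] [ContinuousSMul G X] [T2Space X]
    (h : PalaisProper G X) : T1Space (orbitRel.Quotient G X) := by
  refine ⟨fun q => ?_⟩
  induction q using Quotient.inductionOn with
  | h x =>
    rw [← isQuotientMap_quotient_mk'.isClosed_preimage]
    convert h.isClosed_orbit x
    ext
    exact Quotient.eq

theorem SmallSet.continuous_orbitSup [ContinuousInv G] [ContinuousSMul G X] {S : Set X}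
    (hS : SmallSet G S) {u : X → ℝ} (hu : Continuous u) (hu0 : 0 ≤ u) (hbdd : BddAbove (range u))
    (hSu : EqOn u 0 Sᶜ) : Continuous (orbitSup G u) := by
  refine continuous_iff_continuousAt.2 fun y => ?_
  obtain ⟨V, hV, K, hK, hKS⟩ := hS.exists_isCompact_smul_mem y
  have hcont : Continuous fun z => sSup ((fun g : G => u (g • z)) '' insert 1 K) :=
    (hK.insert 1).continuous_sSup (hu.comp (continuous_snd.smul continuous_fst))
  -- on `V`, the terms with `g ∉ K` vanish, so the supremum may be taken over `insert 1 K`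
  refine hcont.continuousAt.congr (eventually_of_mem hV fun z hz => ?_)
  have hb : BddAbove (range fun g : G => u (g • z)) := hbdd.mono (range_comp_subset_range _ _)
  have hbK : BddAbove ((fun g : G => u (g • z)) '' insert 1 K) := hb.mono (image_subset_range _ _)
  refine le_antisymm (csSup_le (by simp) ?_) (ciSup_le fun g => ?_)
  · rintro _ ⟨g, -, rfl⟩
    exact le_ciSup hb g
  · by_cases hg : g ∈ K
    · exact le_csSup hbK ⟨g, mem_insert_of_mem _ hg, rfl⟩
    · rw [hSu fun hgS => hg (hKS z hz g hgS)]
      exact (hu0 ((1 : G) • z)).trans (le_csSup hbK ⟨1, mem_insert _ _, rfl⟩)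

theorem PalaisProper.exists_continuous_invariant_separating [ContinuousInv G] [ContinuousSMul G X]
    [CompletelyRegularSpace X] (h : PalaisProper G X) {A : Set X} (hA : IsClosed A)
    (hAinv : ∀ g : G, ∀ y ∈ A, g • y ∈ A) {x₀ : X} (hx₀ : x₀ ∉ A) :
    ∃ F : X → ℝ, Continuous F ∧ (∀ (g : G) x, F (g • x) = F x) ∧ F x₀ = 1 ∧ EqOn F 0 A := by
  obtain ⟨S, hSo, hx₀S, hS⟩ := h x₀
  obtain ⟨f, hf, hfx₀, hf1⟩ := CompletelyRegularSpace.completely_regular x₀ (A ∪ Sᶜ)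
    (hA.union hSo.isClosed_compl) (by simp [hx₀, hx₀S])
  set u : X → ℝ := fun z => 1 - f z
  have hu : Continuous u := continuous_const.sub (continuous_subtype_val.comp hf)
  have hu1 : ∀ z, u z ≤ 1 := fun z => sub_le_self _ (f z).2.1
  have hu0 : EqOn u 0 (A ∪ Sᶜ) := fun z hz => by simp [u, hf1 hz]
  refine ⟨orbitSup G u, hS.continuous_orbitSup hu (fun z => sub_nonneg.2 (f z).2.2)
    ⟨1, by rintro _ ⟨z, rfl⟩; exact hu1 z⟩ (hu0.mono subset_union_right),
    orbitSup_smul u, orbitSup_eq_one hu1 (by simp [u, hfx₀]),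
    fun y hy => orbitSup_eq_zero hAinv (hu0.mono subset_union_left) hy⟩

theorem PalaisProper.completelyRegularSpace_quotient [ContinuousInv G] [ContinuousSMul G X]
    [CompletelyRegularSpace X] (h : PalaisProper G X) :
    CompletelyRegularSpace (orbitRel.Quotient G X) := by
  refine ⟨fun q C hC hqC => ?_⟩
  induction q using Quotient.inductionOn with
  | h x₀ =>
    have hCinv : ∀ (g : G) y, ⟦y⟧ ∈ C → (⟦g • y⟧ : orbitRel.Quotient G X) ∈ C := fun g y hy => by
      rwa [orbitRel.Quotient.quotient_smul_eq]
    obtain ⟨F, hF, hFinv, hFx₀, hFC⟩ :=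
      h.exists_continuous_invariant_separating (hC.preimage continuous_quot_mk) hCinv hqC
    let Fq : orbitRel.Quotient G X → ℝ := Quotient.lift F fun _ _ ⟨g, hg⟩ => hg ▸ hFinv g _
    have hFq : Continuous Fq := isQuotientMap_quot_mk.continuous_iff.mpr hF
    refine ⟨fun p => projIcc 0 1 zero_le_one (1 - Fq p),
      continuous_projIcc.comp (continuous_const.sub hFq), ?_, fun p hp => ?_⟩
    · simp [Fq, hFx₀]
    · induction p using Quotient.inductionOn with
      | h y => simp [Fq, hFC hp]

end

theorem palais_proper_orbit_space_tychonoff_general {G X : Type*} [Group G]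
    [TopologicalSpace G] [IsTopologicalGroup G]
    [TopologicalSpace X] [T35Space X] [MulAction G X] [ContinuousSMul G X]
    (h : PalaisProper G X) :
    T35Space (Quotient (MulAction.orbitRel G X)) :=
  haveI := h.t1Space_quotient
  { toCompletelyRegularSpace := h.completelyRegularSpace_quotient }

/-- For a proper (in the sense of Palais) action of a locally compact group on a
Tychonoff space, the orbit space is Tychonoff. -/
theorem palais_proper_orbit_space_tychonoff {G X : Type*} [Group G]
    [TopologicalSpace G] [IsTopologicalGroup G] [LocallyCompactSpace G]
    [TopologicalSpace X] [T35Space X] [MulAction G X] [ContinuousSMul G X]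
    (h : PalaisProper G X) :
    T35Space (Quotient (MulAction.orbitRel G X)) :=
  palais_proper_orbit_space_tychonoff_general h
end
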